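/- arXiv:1703.02513 — 2 statements merged into one kernel-verified Lean document; each statement's English description precedes it below -/
import Mathlib

section
/- The map ε sending (ν, μ_1, ..., μ_k) to (ν ∪ μ_1^t ∪ ... ∪ μ_k^t, μ_1^t, ..., μ_k^t), where μ_i^t denotes the transpose (conjugate) partition, is a bijection from Q_{n,r_1,...,r_k} to P_{n,r_1,...,r_k}. -/
/-!
Write `countGe s v` for the number of parts of `s` that are at least `v`; the cell in row `v + 1`
and column `t + 1` belongs to the Young diagram of `s` iff `v < countGe s (t + 1)`. The parts of
`conj s` are the numbers `countGe s (t + 1)`, and since `countGe s` is antitone the cells of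
`conj s` are exactly the reflected cells of `s`. Hence `conj` is an involution on partitions which
preserves size and turns "all parts are at most `r`" into "at most `r` parts". The inverse of `ε`
is then `(λ, τ_1, …, τ_k) ↦ (λ - ∑ τ_i, τ_1ᵗ, …, τ_kᵗ)`.
-/

/-- The conjugate (transpose) of a partition, represented as a multiset of
(positive) parts: the parts of `conj s` are the column lengths of the Young
diagram of `s`. -/
def conj (s : Multiset ℕ) : Multiset ℕ :=
  ((Multiset.range s.sum).map fun i => Multiset.card (s.filter fun p => i + 1 ≤ p)).filter
    fun m => 0 < m

namespace Conj

open Multiset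

def countGe (s : Multiset ℕ) (v : ℕ) : ℕ := s.countP (v ≤ ·)

theorem conj_eq_filter_map_countGe (s : Multiset ℕ) :
    conj s = ((range s.sum).map fun i => countGe s (i + 1)).filter (0 < ·) := by
  simp only [conj, countGe, countP_eq_card_filter]

theorem countGe_antitone (s : Multiset ℕ) : Antitone (countGe s) := fun _ _ h => by
  simp only [countGe, countP_eq_card_filter]
  exact card_le_card (monotone_filter_right s fun _ => h.trans)

theorem countGe_pos_iff {s : Multiset ℕ} {v : ℕ} : 0 < countGe s v ↔ ∃ p ∈ s, v ≤ p :=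
  countP_pos

theorem countGe_eq_countGe_succ_add_count (s : Multiset ℕ) (v : ℕ) :
    countGe s v = countGe s (v + 1) + count v s := by
  induction s using Multiset.induction with
  | empty => simp [countGe]
  | cons a s ih =>
    simp only [countGe] at ih ⊢
    rw [countP_cons, countP_cons, count_cons, ih]
    split_ifs <;> omega

theorem sum_range_countGe_succ {s : Multiset ℕ} {N : ℕ} (h : ∀ p ∈ s, p ≤ N) :
    ∑ i ∈ Finset.range N, countGe s (i + 1) = s.sum := by
  induction s using Multiset.induction with
  | empty => simp [countGe]
  | cons a s ih =>
    have hcol : ∑ i ∈ Finset.range N, (if i + 1 ≤ a then 1 else 0) = a := by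
      rw [Finset.sum_boole, Finset.range_eq_Ico]
      simp only [Nat.add_one_le_iff, Finset.Ico_filter_lt, Nat.cast_id, Nat.card_Ico]
      have := h a (mem_cons_self a s)
      omega
    simp only [countGe, countP_cons] at ih ⊢
    rw [Finset.sum_add_distrib, ih fun p hp => h p (mem_cons_of_mem hp), hcol, sum_cons, add_comm]

theorem pos_of_mem_conj {s : Multiset ℕ} {x : ℕ} (h : x ∈ conj s) : 0 < x := by
  rw [conj_eq_filter_map_countGe, mem_filter] at h
  exact h.2

theorem le_card_of_mem_conj {s : Multiset ℕ} {x : ℕ} (h : x ∈ conj s) : x ≤ card s := by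
  rw [conj_eq_filter_map_countGe, mem_filter, mem_map] at h
  obtain ⟨⟨i, -, rfl⟩, -⟩ := h
  exact countP_le_card _ _

theorem sum_conj (s : Multiset ℕ) : (conj s).sum = s.sum := by
  have hfilter : ∀ m : Multiset ℕ, (m.filter (0 < ·)).sum = m.sum := by
    intro m
    induction m using Multiset.induction with
    | empty => rfl
    | cons a m ih => rcases Nat.eq_zero_or_pos a with rfl | ha <;> simp [*]
  rw [conj_eq_filter_map_countGe, hfilter]
  exact sum_range_countGe_succ fun p hp => le_sum_of_mem hp

theorem lt_countGe_conj_iff (s : Multiset ℕ) (t v : ℕ) :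
    t < countGe (conj s) (v + 1) ↔ v < countGe s (t + 1) := by
  set S := (Finset.range s.sum).filter fun i => v < countGe s (i + 1)
  have hS : countGe (conj s) (v + 1) = S.card := by
    rw [conj_eq_filter_map_countGe, countGe, countP_filter, countP_map]
    exact congrArg card (filter_congr fun i _ => by omega)
  rw [hS]
  constructor
  · intro ht
    by_contra! hv
    have hsub : S ⊆ Finset.range t := fun i hi => by
      have hvi := (Finset.mem_filter.1 hi).2
      by_contra! hti
      have := countGe_antitone s (show t + 1 ≤ i + 1 by simpa using hti)
      omega
    have := Finset.card_le_card hsub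
    simp only [Finset.card_range] at this
    omega
  · intro hv
    obtain ⟨p, hp, htp⟩ := countGe_pos_iff.1 (v.zero_le.trans_lt hv)
    have hsub : Finset.range (t + 1) ⊆ S := fun i hi => by
      have hit : i + 1 ≤ t + 1 := Finset.mem_range.1 hi
      have := le_sum_of_mem hp
      exact Finset.mem_filter.2
        ⟨Finset.mem_range.2 (by omega), hv.trans_le (countGe_antitone s hit)⟩
    simpa using Finset.card_le_card hsub

theorem countGe_conj_conj (s : Multiset ℕ) (v : ℕ) :
    countGe (conj (conj s)) (v + 1) = countGe s (v + 1) :=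
  eq_of_forall_lt_iff fun t => by rw [lt_countGe_conj_iff, lt_countGe_conj_iff]

theorem conj_conj {s : Multiset ℕ} (hs : ∀ x ∈ s, 0 < x) : conj (conj s) = s := by
  ext m
  rcases m with _ | v
  · rw [count_eq_zero.2 fun h => (pos_of_mem_conj h).ne rfl,
      count_eq_zero.2 fun h => (hs 0 h).ne rfl]
  · have hcc := countGe_eq_countGe_succ_add_count (conj (conj s)) (v + 1)
    have hss := countGe_eq_countGe_succ_add_count s (v + 1)
    rw [countGe_conj_conj, countGe_conj_conj] at hcc
    omega

theorem card_conj_le {s : Multiset ℕ} {r : ℕ} (h : ∀ p ∈ s, p ≤ r) : card (conj s) ≤ r := by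
  have hcard : card (conj s) = countGe (conj s) (0 + 1) :=
    (countP_eq_card.2 fun _ hx => pos_of_mem_conj hx).symm
  rw [hcard]
  by_contra! hr
  obtain ⟨p, hp, hrp⟩ := countGe_pos_iff.1 ((lt_countGe_conj_iff s r 0).1 hr)
  exact absurd (h p hp) (by omega)

section Epsilon

variable {k : ℕ} (n : ℕ) (r : Fin k → ℕ)

def MemQ (q : Multiset ℕ × (Fin k → Multiset ℕ)) : Prop :=
  (∀ x ∈ q.1, 0 < x) ∧ (∀ i, ∀ x ∈ q.2 i, 0 < x ∧ x ≤ r i) ∧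
    (∑ i, (q.2 i).sum) ≤ n ∧ q.1.sum = n - ∑ i, (q.2 i).sum

/-- Multisets make the paper's identification of lists differing by a permutation of equal parts
of `λ` automatic, so `P_{n,r}` is a plain set of pairs. -/
def MemP (p : Multiset ℕ × (Fin k → Multiset ℕ)) : Prop :=
  (∀ x ∈ p.1, 0 < x) ∧ p.1.sum = n ∧ (∀ i, card (p.2 i) ≤ r i) ∧ (∑ i, p.2 i) ≤ p.1

variable {n r}

theorem memP_epsilon {q : Multiset ℕ × (Fin k → Multiset ℕ)} (hq : MemQ n r q) :
    MemP n r (q.1 + ∑ i, conj (q.2 i), fun i => conj (q.2 i)) := by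
  obtain ⟨hν, hμ, hle, hsum⟩ := hq
  refine ⟨?_, ?_, fun i => card_conj_le fun p hp => (hμ i p hp).2, le_add_left _ _⟩
  · intro x hx
    rcases mem_add.1 hx with hx | hx
    · exact hν x hx
    · obtain ⟨i, -, hx⟩ := Multiset.mem_sum.1 hx
      exact pos_of_mem_conj hx
  · simp only [sum_add, Multiset.sum_sum, sum_conj]
    omega

theorem memQ_epsilon_symm {p : Multiset ℕ × (Fin k → Multiset ℕ)} (hp : MemP n r p) :
    MemQ n r (p.1 - ∑ i, p.2 i, fun i => conj (p.2 i)) := by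
  obtain ⟨hl, hsum, hcard, hle⟩ := hp
  have hsplit : (p.1 - ∑ i, p.2 i).sum + ∑ i, (p.2 i).sum = n := by
    rw [← Multiset.sum_sum, ← sum_add, tsub_add_cancel_of_le hle, hsum]
  refine ⟨fun x hx => hl x (mem_of_le tsub_le_self hx), fun i x hx => ?_, ?_, ?_⟩
  · exact ⟨pos_of_mem_conj hx, (le_card_of_mem_conj hx).trans (hcard i)⟩
  all_goals simp only [sum_conj]; omega

theorem conj_conj_of_memP {p : Multiset ℕ × (Fin k → Multiset ℕ)} (hp : MemP n r p) (i : Fin k) :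
    conj (conj (p.2 i)) = p.2 i :=
  conj_conj fun x hx => hp.1 x (mem_of_le hp.2.2.2 (Multiset.mem_sum.2 ⟨i, Finset.mem_univ i, hx⟩))

variable (n r)

def epsilon : {q // MemQ n r q} ≃ {p // MemP n r p} where
  toFun q := ⟨(q.1.1 + ∑ i, conj (q.1.2 i), fun i => conj (q.1.2 i)), memP_epsilon q.2⟩
  invFun p := ⟨(p.1.1 - ∑ i, p.1.2 i, fun i => conj (p.1.2 i)), memQ_epsilon_symm p.2⟩
  left_inv := by
    rintro ⟨⟨ν, μ⟩, hq⟩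
    have hμ : ∀ i, conj (conj (μ i)) = μ i := fun i => conj_conj fun x hx => (hq.2.1 i x hx).1
    simp only [hμ, add_tsub_cancel_right]
  right_inv := by
    rintro ⟨⟨l, τ⟩, hp⟩
    simp only [conj_conj_of_memP hp, tsub_add_cancel_of_le hp.2.2.2]

end Epsilon

end Conj

/-- The map `ε : (ν, μ_1, …, μ_k) ↦ (ν ∪ μ_1ᵗ ∪ ⋯ ∪ μ_kᵗ, μ_1ᵗ, …, μ_kᵗ)` is a
bijection from `Q_{n,r_1,…,r_k}` to `P_{n,r_1,…,r_k}`. -/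
theorem stmt1 (n k : ℕ) (r : Fin k → ℕ) :
    ∃ e : {q : Multiset ℕ × (Fin k → Multiset ℕ) //
            (∀ x ∈ q.1, 0 < x) ∧ (∀ i, ∀ x ∈ q.2 i, 0 < x ∧ x ≤ r i) ∧
            (∑ i, (q.2 i).sum) ≤ n ∧ q.1.sum = n - ∑ i, (q.2 i).sum} ≃
          {p : Multiset ℕ × (Fin k → Multiset ℕ) //
            (∀ x ∈ p.1, 0 < x) ∧ p.1.sum = n ∧ (∀ i, Multiset.card (p.2 i) ≤ r i) ∧
            (∑ i, p.2 i) ≤ p.1},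
      ∀ q, (e q).val.1 = q.val.1 + ∑ i, conj (q.val.2 i) ∧
        ∀ i, (e q).val.2 i = conj (q.val.2 i) :=
  ⟨Conj.epsilon n r, fun _ => ⟨rfl, fun _ => rfl⟩⟩
end

section
/- Let p: Z → H be a finite flat morphism of schemes of constant degree m and E a locally free sheaf of rank r on the source of a morphism q: Z → Y. Then the pushforward p_*(q^*E) is a locally free sheaf of rank r·m on H. -/
open Module

/-- Over a zero ring `B` every module has `finrank` one and `M` is zero, so both sides are
`finrank A B`; otherwise this is `Module.finrank_mul_finrank`. -/
theorem Module.finrank_mul_finrank_of_free (A B M : Type*) [CommRing A] [CommRing B]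
    [Algebra A B] [AddCommMonoid M] [Module B M] [Module A M] [IsScalarTower A B M]
    [Module.Free A B] [Module.Free B M] :
    finrank A B * finrank B M = finrank A M := by
  rcases subsingleton_or_nontrivial B with hB | hB
  · have : Subsingleton M := Module.subsingleton B M
    rw [finrank_subsingleton (R := B), mul_one]
    exact (LinearEquiv.ofSubsingleton B M).finrank_eq
  · have : Nontrivial A := (algebraMap A B).domain_nontrivial
    exact finrank_mul_finrank A B M

theorem stmt17_general (A B M : Type*) [CommRing A] [CommRing B] [Algebra A B]
    [AddCommGroup M] [Module B M] [Module A M] [IsScalarTower A B M]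
    [Module.Free A B] [Module.Free B M]
    (m r : ℕ) (hm : Module.finrank A B = m) (hr : Module.finrank B M = r) :
    Module.Free A M ∧ Module.finrank A M = r * m := by
  refine ⟨Module.Free.trans (S := B), ?_⟩
  rw [← Module.finrank_mul_finrank_of_free A B M, hm, hr, Nat.mul_comm]

/-- Affine-local form of the tautological bundle statement: if `B` is an
`A`-algebra which is finite locally free (free) of rank `m` over `A` (the finite
flat degree-`m` morphism), and `M` is a finite free `B`-module of rank `r` (the
pullback of the rank-`r` bundle), then `M`, viewed as an `A`-module (the
pushforward), is free of rank `r·m`. -/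
theorem stmt17 (A B M : Type*) [CommRing A] [CommRing B] [Algebra A B]
    [AddCommGroup M] [Module B M] [Module A M] [IsScalarTower A B M]
    [Module.Free A B] [Module.Finite A B] [Module.Free B M] [Module.Finite B M]
    (m r : ℕ) (hm : Module.finrank A B = m) (hr : Module.finrank B M = r) :
    Module.Free A M ∧ Module.finrank A M = r * m :=
  stmt17_general A B M m r hm hr
end
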